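/- (Bound on the contour dressing factor) There is a constant C>0 such that, if z k² is sufficiently small, then for every q∈{1,2,3} and every contour γ: exp(−∫_{Ω^q_Λ} dP φ^T(P) z^{|P|} F_γ(P)) ≤ e^{C z²k⁵ |Γ_γ'|}, where the integral is over finite type-q plate configurations in Λ, |Γ_γ'| is the number of blocks of the support Γ_γ, and z²k⁵ = (zk³)(zk²). -/

import Mathlib

open MeasureTheory Filter

attribute [local instance] Classical.propDecidable

noncomputable section

/-! ## Basic geometry of hard plates -/

/-- a point of `ℝ³` -/
abbrev Pt : Type := Fin 3 → ℝ

/-- an orientation: a type `i ∈ {1,2,3}` together with one of the two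
assignments (`a` = `true`, `b` = `false`) of the sides `k^α` and `k`
to the two axes orthogonal to `i` -/
abbrev Orient : Type := Fin 3 × Bool

/-- a plate: a center together with an orientation -/
abbrev Plate : Type := Pt × Orient

/-- a block index in `ℤ³` -/
abbrev I3 : Type := Fin 3 → ℤ

/-- the side length, along the coordinate axis `j`, of a `1 × k^α × k` plate
with orientation `o`: side `1` along the axis `o.1`, and sides `k^α`, `k`
along the two other axes, in one of the two possible ways according to `o.2`. -/
def sideLen (k α : ℝ) (o : Orient) (j : Fin 3) : ℝ :=
  if j = o.1 then 1
  else if j = o.1 + 1 then (if o.2 then k ^ α else k)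
  else if o.2 then k else k ^ α

/-- the support `R_p` of a plate: the closed axis-aligned box centered at the
center of the plate, with side lengths `1, k^α, k` as prescribed by its orientation -/
def plSupport (k α : ℝ) (p : Plate) : Set Pt :=
  {y | ∀ j, |y j - p.1 j| ≤ sideLen k α p.2 j / 2}

/-- two plates intersect if their supports do -/
def Intersects (k α : ℝ) (p p' : Plate) : Prop :=
  (plSupport k α p ∩ plSupport k α p').Nonempty

/-- hard-core pair interaction `φ(p,p')` -/
def phi2 (k α : ℝ) (p p' : Plate) : ℝ := if Intersects k α p p' then 0 else 1

/-- hard-core factor `φ(p_1,…,p_n) = ∏_{i<j} φ(p_i,p_j)` of a finite plate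
configuration, given as a list -/
def phiL (k α : ℝ) : List Plate → ℝ
  | [] => 1
  | p :: ps => (ps.map (fun p' => phi2 k α p p')).prod * phiL k α ps

/-- hard-core interaction between two configurations -/
def crossL (k α : ℝ) (P Q : List Plate) : ℝ :=
  (P.map (fun p => (Q.map (fun p' => phi2 k α p p')).prod)).prod

/-- the plate configuration built from centers `x` and orientations `o` -/
def mkConf {n : ℕ} (x : Fin n → Pt) (o : Fin n → Orient) : List Plate :=
  List.ofFn (fun m => (x m, o m))

/-- the Ursell function `φ^T(p_1,…,p_n)`: the sum over connected graphs on the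
`n` labelled vertices (encoded by their edge sets, listed with `e.1 < e.2`) of
`∏_{{j,j'} ∈ E(g)} (φ(p_j,p_{j'}) - 1)`.  It equals `1` for `n = 1` and
vanishes for `n = 0`. -/
def ursell (k α : ℝ) {n : ℕ} (p : Fin n → Plate) : ℝ :=
  ∑ E : Finset (Fin n × Fin n),
    if (∀ e ∈ E, e.1 < e.2) ∧ (SimpleGraph.fromRel (fun i j => (i, j) ∈ E)).Connected then
      ∏ e ∈ E, (phi2 k α (p e.1) (p e.2) - 1)
    else 0

/-- the two orientations of type `q` -/
def typeOrients (q : Fin 3) : Finset Orient := {(q, true), (q, false)}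

/-! ## Partition functions of uniform systems -/

/-- grand-canonical partition function at activity `z` of plates with centers
in `S` and orientations in the finite set `O`:
`1 + ∑_{n≥1} (z^n/n!) ∫_{S^n} ∑_{orientations} φ(p_1,…,p_n)`
(the `n = 0` term of the series equals `1`). -/
def ZGen (k α z : ℝ) (S : Set Pt) (O : Finset Orient) : ℝ :=
  ∑' n : ℕ, (z ^ n / (Nat.factorial n : ℝ)) *
    ∫ x : Fin n → Pt in Set.univ.pi (fun _ => S),
      ∑ o : Fin n → {a // a ∈ O}, phiL k α (mkConf x (fun m => (o m).1))

/-- partition function of plate configurations in `S` containing at least two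
plates of different types -/
def Zge2 (k α z : ℝ) (S : Set Pt) : ℝ :=
  ∑' n : ℕ, (z ^ n / (Nat.factorial n : ℝ)) *
    ∫ x : Fin n → Pt in Set.univ.pi (fun _ => S),
      ∑ o : Fin n → Orient,
        (if ∃ i j : Fin n, (o i).1 ≠ (o j).1 then phiL k α (mkConf x o) else 0)

/-- the closed axis-aligned cube with center `c` and side `s` -/
def cube (c : Pt) (s : ℝ) : Set Pt := {y | ∀ j, |y j - c j| ≤ s / 2}

/-- partition function of plate configurations with centers in `A ∪ B`, all
plates with center in `A` being of type `i` and all other plates of type `j` -/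
def Zpair (k α z : ℝ) (i j : Fin 3) (A B : Set Pt) : ℝ :=
  ∑' n : ℕ, (z ^ n / (Nat.factorial n : ℝ)) *
    ∫ x : Fin n → Pt in Set.univ.pi (fun _ => A ∪ B),
      ∑ b : Fin n → Bool,
        phiL k α (mkConf x (fun m => ((if x m ∈ A then i else j), b m)))

/-- `Z^{≥2}(Δ₁ ∪ Δ₂)` for a dipole: sum over pairs of distinct types -/
def Zdip (k α z : ℝ) (A B : Set Pt) : ℝ :=
  ∑ i : Fin 3, ∑ j : Fin 3, if i ≠ j then Zpair k α z i j A B else 0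

/-! ## Pebbles -/

/-- the pebble with index `v` in the cube of corner `c` paved by cubes of
side `k^α/2` -/
def pebbleBox (k α : ℝ) {M : ℕ} (c : Pt) (v : Fin 3 → Fin M) : Set Pt :=
  {y | ∀ j, c j + (k ^ α / 2) * ((v j : ℕ) : ℝ) ≤ y j ∧
            y j ≤ c j + (k ^ α / 2) * (((v j : ℕ) : ℝ) + 1)}

/-- a pebble is typical of type `i` if it contains the centers of at least two
plates of `P` of type `i` with different orientations -/
def TypicalIn (k α : ℝ) {M : ℕ} (c : Pt) (P : Finset Plate) (v : Fin 3 → Fin M)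
    (i : Fin 3) : Prop :=
  ∃ p ∈ P, ∃ p' ∈ P, p.2 ≠ p'.2 ∧ p.2.1 = i ∧ p'.2.1 = i ∧
    p.1 ∈ pebbleBox k α c v ∧ p'.1 ∈ pebbleBox k α c v

/-- a pebble is atypical if it does not contain the centers of two plates of
`P` with different orientations -/
def AtypicalIn (k α : ℝ) {M : ℕ} (c : Pt) (P : Finset Plate) (v : Fin 3 → Fin M) : Prop :=
  ¬ ∃ p ∈ P, ∃ p' ∈ P, p.2 ≠ p'.2 ∧ p.1 ∈ pebbleBox k α c v ∧ p'.1 ∈ pebbleBox k α c v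

/-! ## Blocks, spins and conditioned partition functions -/

/-- the index of the (half-open) block of side `l` containing `x` -/
def blockIdx (l : ℝ) (x : Pt) : I3 := fun j => ⌊x j / l⌋

/-- the region of `ℝ³` paved by the blocks of side `ℓ = k/2` with indices in `B` -/
def regionOf (k : ℝ) (B : Finset I3) : Set Pt := {x | blockIdx (k / 2) x ∈ B}

/-- the closed region paved by the blocks with indices in `Y` -/
def regionClosed (k : ℝ) (Y : Finset I3) : Set Pt :=
  {x | ∃ ξ ∈ Y, ∀ j, (k / 2) * (ξ j : ℝ) ≤ x j ∧ x j ≤ (k / 2) * ((ξ j : ℝ) + 1)}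

/-- the block `ξ` is within rescaled `L^∞`-distance `r` of the complement of `B` -/
def nearBoundary (B : Finset I3) (r : ℤ) (ξ : I3) : Prop :=
  ∃ η : I3, η ∉ B ∧ ∀ j, |ξ j - η j| ≤ r

/-- the spin value (in `{0,1,2,3,4}`) corresponding to the plate type `i` -/
def spinOfType (i : Fin 3) : Fin 5 := ⟨i.1 + 1, by have := i.isLt; omega⟩

/-- the weight of the block `ξ` carrying the spin `s` in the presence of the
plate configuration `P`: empty blocks get weight `1`, `-2`, `0` for
`s ∈ {1,2,3}`, `s = 0`, `s = 4` respectively, and nonempty blocks enforce the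
compatibility of the plates they contain with the spin `s`. -/
def blockWeightL (l : ℝ) (P : List Plate) (ξ : I3) (s : Fin 5) : ℝ :=
  if ∀ p ∈ P, blockIdx l p.1 ≠ ξ then
    (if s = 0 then -2 else if s = 4 then 0 else 1)
  else if s = 4 then
    (if ∃ p ∈ P, ∃ p' ∈ P, blockIdx l p.1 = ξ ∧ blockIdx l p'.1 = ξ ∧ p.2.1 ≠ p'.2.1
     then 1 else 0)
  else if ∃ i : Fin 3, s = spinOfType i ∧ ∀ p ∈ P, blockIdx l p.1 = ξ → p.2.1 = i
    then 1 else 0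

/-- total compatibility weight of a plate configuration with a spin configuration -/
def confWeightL (l : ℝ) (B : Finset I3) (σ : I3 → Fin 5) (P : List Plate) : ℝ :=
  ∏ ξ ∈ B, blockWeightL l P ξ (σ ξ)

/-- extension (by `0`) of a spin configuration on `B` to all of `ℤ³` -/
def extFn (B : Finset I3) (σ : {ξ // ξ ∈ B} → Fin 5) : I3 → Fin 5 :=
  fun ξ => if h : ξ ∈ B then σ ⟨ξ, h⟩ else 0

/-- indicator of the `q`-boundary condition: the spin equals `q` on every block
within rescaled `L^∞`-distance `8` of the complement of `B` -/
def bcWeight (B : Finset I3) (q : Fin 3) (σ : {ξ // ξ ∈ B} → Fin 5) : ℝ :=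
  if ∀ ξ : {ξ // ξ ∈ B}, nearBoundary B 8 ξ.1 → σ ξ = spinOfType q then 1 else 0

/-- the partition function with `q`-boundary conditions on the union `Λ` of the
blocks indexed by `B`, with plate centers restricted to `Λ ∖ V` and with the
additional hard-core constraint that plates must not intersect the plates of
the fixed configuration `Pc`:
`Z = ∑_{σ ∈ Θ^q} ∫_{Ω_Λ(σ)} dP φ(P) z^{|P|} ∏_{p ∈ P, p' ∈ Pc} φ(p,p')`. -/
def ZBCgen (k α z : ℝ) (B : Finset I3) (V : Set Pt) (q : Fin 3) (Pc : List Plate) : ℝ :=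
  ∑ σ : {ξ // ξ ∈ B} → Fin 5,
    bcWeight B q σ *
      ∑' n : ℕ, (z ^ n / (Nat.factorial n : ℝ)) *
        ∫ x : Fin n → Pt in Set.univ.pi (fun _ => regionOf k B \ V),
          ∑ o : Fin n → Orient,
            confWeightL (k / 2) B (extFn B σ) (mkConf x o) * phiL k α (mkConf x o) *
              crossL k α (mkConf x o) Pc

/-- the `n`-point correlation function with `q`-boundary conditions,
`ρ_n^{(q,Λ)}(p_1,…,p_n) = Z(Λ|q)^{-1} ∑_{σ∈Θ^q} ∫_{Ω_Λ(σ)} dP z^{|P|+n} φ((p_1,…,p_n) ∪ P)` -/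
def corrBC (k α z : ℝ) (B : Finset I3) (V : Set Pt) (q : Fin 3) (Ps : List Plate) : ℝ :=
  (ZBCgen k α z B V q [])⁻¹ * z ^ Ps.length * phiL k α Ps * ZBCgen k α z B V q Ps

/-- an increasing sequence of cubic boxes invading `ℝ³`, each consisting of
`(8(m+1)-2)³` blocks (so that `L + 2ℓ` is divisible by `8ℓ`) -/
def boxB0 (m : ℕ) : Finset I3 :=
  Finset.Icc (fun _ => -(4 * (m : ℤ) + 3)) (fun _ => 4 * (m : ℤ) + 2)

/-- the cubic box with `(8m-2)³` blocks, aligned with the lattice of smoothing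
cubes (which exceed it by one block on each side) -/
def boxBm (m : ℕ) : Finset I3 :=
  Finset.Icc (fun _ => (-1 : ℤ)) (fun _ => 8 * (m : ℤ) - 4)

/-- `ε = max{(zk²)^{c₁}, e^{-c₂ z k^{2+α}}}` -/
def epsParam (k α z c1 c2 : ℝ) : ℝ :=
  max ((z * k ^ 2) ^ c1) (Real.exp (-(c2 * z * k ^ (2 + α))))

/-! ## Contours -/

/-- `D`-adjacency of blocks: distinct and touching on a face, an edge or a corner -/
def adjD (ξ η : I3) : Prop := ξ ≠ η ∧ ∀ j, |ξ j - η j| ≤ 1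

/-- reachability within a set of blocks through `D`-adjacency steps -/
def ReachIn (S : Finset I3) (ξ η : I3) : Prop :=
  Relation.ReflTransGen (fun a b => a ∈ S ∧ b ∈ S ∧ adjD a b) ξ η

/-- a nonempty `D`-connected set of blocks -/
def DConn (S : Finset I3) : Prop := S.Nonempty ∧ ∀ ξ ∈ S, ∀ η ∈ S, ReachIn S ξ η

/-- `Γ` is a `D`-connected component of `S` -/
def IsDComponent (S Γ : Finset I3) : Prop :=
  Γ ⊆ S ∧ DConn Γ ∧ ∀ ξ ∈ Γ, ∀ η ∈ S, adjD ξ η → η ∈ Γ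

/-- two sets of blocks are `D`-disconnected -/
def DDisj (A B : Finset I3) : Prop := ∀ ξ ∈ A, ∀ η ∈ B, ξ ≠ η ∧ ¬ adjD ξ η

/-- the combinatorial datum of a contour: its support (a set of blocks) and its
spin configuration (normalized to `0` outside the support) -/
structure Skeleton where
  Γ : Finset I3
  σ : I3 → Fin 5

/-- the blocks of the smoothing cube (of side `8ℓ`) with index `a` -/
def smoothBlocks (a : I3) : Finset I3 :=
  Finset.Icc (fun j => 8 * a j - 2) (fun j => 8 * a j + 5)

/-- the index of the smoothing cube containing the block `η` -/
def smoothIdx (η : I3) : I3 := fun j => Int.fdiv (η j + 2) 8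

/-- the sampling cube `S_ξ` (the `8` blocks `η` with `η j - ξ j ∈ {0,1}`) is
good: all its spins are equal and lie in `{1,2,3}` -/
def sampGood (B : Finset I3) (σ : I3 → Fin 5) (ξ : I3) : Prop :=
  ∃ i : Fin 3, ∀ η ∈ B, (∀ j, η j = ξ j ∨ η j = ξ j + 1) → σ η = spinOfType i

/-- the union `B(σ)` of the bad sampling cubes -/
def badBlocks (B : Finset I3) (σ : I3 → Fin 5) : Finset I3 :=
  B.filter (fun η => ∃ ξ ∈ B, ¬ sampGood B σ ξ ∧ ∀ j, η j = ξ j ∨ η j = ξ j + 1)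

/-- the union `B_s(σ)` of the smoothing cubes intersecting `B(σ)` -/
def smoothedBad (B : Finset I3) (σ : I3 → Fin 5) : Finset I3 :=
  (badBlocks B σ).biUnion (fun η => smoothBlocks (smoothIdx η))

/-- the bad region `B̄(σ)`: `B_s(σ)` together with all blocks at rescaled
`L^∞`-distance `≤ 1` from it -/
def barB (B : Finset I3) (σ : I3 → Fin 5) : Finset I3 :=
  B.filter (fun ξ => ∃ η ∈ smoothedBad B σ, ∀ j, |ξ j - η j| ≤ 1)

/-- the exterior of `Γ` in `B`: the blocks of `B ∖ Γ` connected to the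
boundary layer of `B` -/
def extBlocks (B Γ : Finset I3) : Finset I3 :=
  (B \ Γ).filter (fun ξ => ∃ η ∈ B \ Γ, nearBoundary B 1 η ∧ ReachIn (B \ Γ) ξ η)

/-- the interiors of `Γ` in `B`: the connected components of `B ∖ Γ` not
touching the boundary of `B` -/
def interiorsSet (B Γ : Finset I3) : Set (Finset I3) :=
  {A | IsDComponent (B \ Γ) A ∧ ∀ ξ ∈ A, ¬ nearBoundary B 1 ξ}

/-- the internal magnetization of the contour `s` on the interior `A`: the
common type prescribed by the spins of `s` on the layer of `Γ` adjacent to `A` -/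
def intMag (s : Skeleton) (A : Finset I3) : Fin 3 :=
  if h : ∃ i : Fin 3, ∀ ξ ∈ s.Γ, (∃ η ∈ A, adjD ξ η) → s.σ ξ = spinOfType i
  then h.choose else 0

/-- the external magnetization of the contour `s` is `q` -/
def extMagIs (B : Finset I3) (s : Skeleton) (q : Fin 3) : Prop :=
  ∀ ξ ∈ s.Γ, (∃ η ∈ extBlocks B s.Γ, adjD ξ η) → s.σ ξ = spinOfType q

/-- the skeleton `s` is a possible contour in `Λ` (associated to the block set
`B`) with `q`-boundary conditions: it arises from a spin configuration
`τ ∈ Θ^q` admitting a compatible plate configuration, as a `D`-connected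
component of the bad region `B̄(τ)`, with matching spins. -/
def PossibleSkel (k α : ℝ) (B : Finset I3) (q : Fin 3) (s : Skeleton) : Prop :=
  (∀ ξ, ξ ∉ s.Γ → s.σ ξ = 0) ∧
  ∃ τ : I3 → Fin 5,
    (∀ ξ ∈ B, nearBoundary B 8 ξ → τ ξ = spinOfType q) ∧
    (∃ P : List Plate, (∀ p ∈ P, p.1 ∈ regionOf k B) ∧
       confWeightL (k / 2) B τ P * phiL k α P ≠ 0) ∧
    IsDComponent (barB B τ) s.Γ ∧ (∀ ξ ∈ s.Γ, s.σ ξ = τ ξ)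

/-- the sub-configuration of the plates of `P` belonging to `Γ` -/
def restrictConf (l : ℝ) (Γ : Finset I3) (P : List Plate) : List Plate :=
  P.filter (fun p => decide (blockIdx l p.1 ∈ Γ))

/-- the function `F_γ(P)` for the contour with support `Γ` and plate
configuration `Pγ`: equal to `1` if `P` contains a plate belonging to `Λ ∖ Γ`
and a plate belonging to `Γ`, or a plate belonging to `Ext Γ` intersecting a
plate of `Pγ`; `0` otherwise. -/
def FgamL (k α : ℝ) (B Γ : Finset I3) (Pγ PQ : List Plate) : ℝ :=
  if (∃ p1 ∈ PQ, ∃ p2 ∈ PQ, blockIdx (k / 2) p1.1 ∉ Γ ∧ blockIdx (k / 2) p2.1 ∈ Γ) ∨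
     (∃ p1 ∈ PQ, blockIdx (k / 2) p1.1 ∈ extBlocks B Γ ∧ ∃ p2 ∈ Pγ, Intersects k α p1 p2)
  then 1 else 0

/-- `∫_{Ω^q_Λ} dP φ^T(P) z^{|P|} F_γ(P)`, the exponent of the dressing factor
of the contour activity -/
def dressInt (k α z : ℝ) (B : Finset I3) (q : Fin 3) (Γ : Finset I3) (Pγ : List Plate) : ℝ :=
  ∑' n : ℕ, (z ^ (n + 1) / (Nat.factorial (n + 1) : ℝ)) *
    ∫ x : Fin (n + 1) → Pt in Set.univ.pi (fun _ => regionOf k B),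
      ∑ b : Fin (n + 1) → Bool,
        ursell k α (fun m => (x m, (q, b m))) *
          FgamL k α B Γ Pγ (mkConf x (fun m => (q, b m)))

/-- the activity `ζ_q^{(Λ)}(γ)` of the contour `γ = (Γ, σ_γ, Pγ)`:
`(z^{|Pγ|} φ(Pγ)/Z^q(Γ)) ∏_j (Z^{(γ)}(Int_j Γ|m^j)/Z(Int_j Γ|q)) e^{-∫ φ^T z^{|P|} F_γ}` -/
def zetaL (k α z : ℝ) (B : Finset I3) (q : Fin 3) (s : Skeleton) (Pγ : List Plate) : ℝ :=
  (z ^ Pγ.length * phiL k α Pγ / ZGen k α z (regionOf k s.Γ) (typeOrients q)) *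
  (∏ᶠ A ∈ interiorsSet B s.Γ,
     ZBCgen k α z A ∅ (intMag s A) Pγ / ZBCgen k α z A ∅ q []) *
  Real.exp (-(dressInt k α z B q s.Γ Pγ))

/-- `∑_{n≥2} ((-1)^n/n!) ∑*_{γ_1,…,γ_n ∈ ∂ distinct} F_{γ_1}(P) ⋯ F_{γ_n}(P)`,
where the plate configuration of each contour is the restriction of `Pfull` to
its support -/
def multiF (k α : ℝ) (B : Finset I3) (D : Finset Skeleton) (Pfull Pq : List Plate) : ℝ :=
  ∑ r ∈ Finset.range (D.card + 1),
    if 2 ≤ r then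
      ((-1 : ℝ) ^ r / (Nat.factorial r : ℝ)) *
        ∑ g : Fin r → {s // s ∈ D},
          (if Function.Injective g then
            ∏ i : Fin r,
              FgamL k α B (g i).1.Γ (restrictConf (k / 2) (g i).1.Γ Pfull) Pq
          else 0)
    else 0

/-- the multi-contour interaction `W^{(Λ)}(∂)` -/
def Wfun (k α z : ℝ) (B : Finset I3) (q : Fin 3) (D : Finset Skeleton)
    (Pfull : List Plate) : ℝ :=
  ∑' n : ℕ, (z ^ (n + 1) / (Nat.factorial (n + 1) : ℝ)) *
    ∫ x : Fin (n + 1) → Pt in Set.univ.pi (fun _ => regionOf k B),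
      ∑ b : Fin (n + 1) → Bool,
        ursell k α (fun m => (x m, (q, b m))) *
          multiF k α B D Pfull (mkConf x (fun m => (q, b m)))

/-- a collection of possible contours, with pairwise `D`-disconnected supports,
all of whose external magnetizations equal `q` -/
def GoodContourConfig (k α : ℝ) (B : Finset I3) (q : Fin 3) (D : Finset Skeleton) : Prop :=
  (∀ s ∈ D, PossibleSkel k α B q s ∧ extMagIs B s q) ∧
  (∀ s ∈ D, ∀ t ∈ D, s ≠ t → DDisj s.Γ t.Γ)

/-- the sum `∑_{∂ ∈ C(Λ,q)} (∏_{γ∈∂} ζ_q^{(Λ)}(γ)) e^{W^{(Λ)}(∂)}` over contour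
configurations, the sum including the integration over the plate
configurations inside the contour supports -/
def contourSum (k α z : ℝ) (B : Finset I3) (q : Fin 3) : ℝ :=
  ∑ᶠ D ∈ {D : Finset Skeleton | D.Nonempty ∧ GoodContourConfig k α B q D},
    ∑' n : ℕ, (1 / (Nat.factorial n : ℝ)) *
      ∫ x : Fin n → Pt in Set.univ.pi (fun _ => regionOf k (D.biUnion Skeleton.Γ)),
        ∑ o : Fin n → Orient,
          (∏ s ∈ D,
            confWeightL (k / 2) s.Γ s.σ (restrictConf (k / 2) s.Γ (mkConf x o)) *
              zetaL k α z B q s (restrictConf (k / 2) s.Γ (mkConf x o))) *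
            Real.exp (Wfun k α z B q D (mkConf x o))

/-! ## Polymers -/

/-- the single-contour part `K_{q,1}^{(Λ)}(X)` of the polymer activity -/
def K1 (k α z : ℝ) (B : Finset I3) (q : Fin 3) (X : Finset I3) : ℝ :=
  ∑ᶠ s ∈ {s : Skeleton | PossibleSkel k α B q s ∧ extMagIs B s q ∧ s.Γ = X},
    ∑' n : ℕ, (1 / (Nat.factorial n : ℝ)) *
      ∫ x : Fin n → Pt in Set.univ.pi (fun _ => regionOf k X),
        ∑ o : Fin n → Orient,
          confWeightL (k / 2) X s.σ (mkConf x o) * zetaL k α z B q s (mkConf x o)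

/-- `𝕀_Y(P)`: `Y` is the smallest `D`-connected union of blocks containing the
supports of all plates of `P` -/
def IndY (k α : ℝ) (Y : Finset I3) (P : List Plate) : ℝ :=
  if DConn Y ∧ (∀ p ∈ P, plSupport k α p ⊆ regionClosed k Y) ∧
      (∀ Y' : Finset I3, Y' ⊆ Y → DConn Y' →
        (∀ p ∈ P, plSupport k α p ⊆ regionClosed k Y') → Y' = Y)
  then 1 else 0

/-- the localized multi-contour interaction `F_∂(Y)` -/
def Fcal (k α z : ℝ) (B : Finset I3) (q : Fin 3) (D : Finset Skeleton)
    (Pfull : List Plate) (Y : Finset I3) : ℝ :=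
  ∑' n : ℕ, (z ^ (n + 1) / (Nat.factorial (n + 1) : ℝ)) *
    ∫ x : Fin (n + 1) → Pt in Set.univ.pi (fun _ => regionOf k B),
      ∑ b : Fin (n + 1) → Bool,
        ursell k α (fun m => (x m, (q, b m))) *
          multiF k α B D Pfull (mkConf x (fun m => (q, b m))) *
          IndY k α Y (mkConf x (fun m => (q, b m)))

/-- `∑_{p≥1} (1/p!) ∑*_{Y_1,…,Y_p ∈ 𝔅^T(X) distinct, ∪Y_j = X₁} ∏_j (e^{F_∂(Y_j)} - 1)` -/
def Ysum (k α z : ℝ) (B : Finset I3) (q : Fin 3) (D : Finset Skeleton)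
    (X X1 : Finset I3) (Pfull : List Plate) : ℝ :=
  ∑' p : ℕ, (1 / (Nat.factorial (p + 1) : ℝ)) *
    ∑ Ys : Fin (p + 1) → {A // A ∈ X.powerset},
      (if Function.Injective Ys ∧ (∀ i, DConn (Ys i).1) ∧
          Finset.univ.sup (fun i => (Ys i).1) = X1
       then ∏ i, (Real.exp (Fcal k α z B q D Pfull (Ys i).1) - 1)
       else 0)

/-- the multi-contour part `K_{q,≥2}^{(Λ)}(X)` of the polymer activity -/
def Kge2 (k α z : ℝ) (B : Finset I3) (q : Fin 3) (X : Finset I3) : ℝ :=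
  ∑ X0 ∈ X.powerset, ∑ X1 ∈ X.powerset,
    (if X0 ∪ X1 = X then (1 : ℝ) else 0) *
      ∑ᶠ D ∈ {D : Finset Skeleton | 2 ≤ D.card ∧ GoodContourConfig k α B q D ∧
                D.biUnion Skeleton.Γ = X0},
        ∑' n : ℕ, (1 / (Nat.factorial n : ℝ)) *
          ∫ x : Fin n → Pt in Set.univ.pi (fun _ => regionOf k X0),
            ∑ o : Fin n → Orient,
              (∏ s ∈ D,
                confWeightL (k / 2) s.Γ s.σ (restrictConf (k / 2) s.Γ (mkConf x o)) *
                  zetaL k α z B q s (restrictConf (k / 2) s.Γ (mkConf x o))) *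
                Ysum k α z B q D X X1 (mkConf x o)

/-- the polymer activity `K_q^{(Λ)}(X) = K_{q,1}^{(Λ)}(X) + K_{q,≥2}^{(Λ)}(X)` -/
def Kpoly (k α z : ℝ) (B : Finset I3) (q : Fin 3) (X : Finset I3) : ℝ :=
  K1 k α z B q X + Kge2 k α z B q X

/-- the polymers of `Λ`: the nonempty `D`-connected unions of blocks of `B` -/
def polymers (B : Finset I3) : Finset (Finset I3) :=
  B.powerset.filter (fun A => DConn A)

/-- hard-core polymer interaction: `1` if `D`-disconnected, `0` otherwise -/
def polyPhi2 (A B : Finset I3) : ℝ := if DDisj A B then 1 else 0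

/-- the polymer Ursell function `φ^T(X_1,…,X_r)` -/
def polyUrsell {r : ℕ} (Xs : Fin r → Finset I3) : ℝ :=
  ∑ E : Finset (Fin r × Fin r),
    if (∀ e ∈ E, e.1 < e.2) ∧ (SimpleGraph.fromRel (fun i j => (i, j) ∈ E)).Connected then
      ∏ e ∈ E, (polyPhi2 (Xs e.1) (Xs e.2) - 1)
    else 0

/-- `∫_{Ω_Γ(σ_γ)} dP_γ |ζ_q^{(Λ)}(γ)|` -/
def contourAbsInt (k α z : ℝ) (B : Finset I3) (q : Fin 3) (s : Skeleton) : ℝ :=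
  ∑' n : ℕ, (1 / (Nat.factorial n : ℝ)) *
    ∫ x : Fin n → Pt in Set.univ.pi (fun _ => regionOf k s.Γ),
      ∑ o : Fin n → Orient,
        |confWeightL (k / 2) s.Γ s.σ (mkConf x o) * zetaL k α z B q s (mkConf x o)|

/-- `∫_{Ω_Γ(σ_γ)} dP_γ z^{|P_γ|} φ(P_γ) / Z^q(Γ)` -/
def contourPlateWeight (k α z : ℝ) (q : Fin 3) (s : Skeleton) : ℝ :=
  (∑' n : ℕ, (z ^ n / (Nat.factorial n : ℝ)) *
    ∫ x : Fin n → Pt in Set.univ.pi (fun _ => regionOf k s.Γ),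
      ∑ o : Fin n → Orient,
        confWeightL (k / 2) s.Γ s.σ (mkConf x o) * phiL k α (mkConf x o)) /
  ZGen k α z (regionOf k s.Γ) (typeOrients q)

/-- the admissible regions `𝔉nt`: connected regions obtained from a union of
smoothing cubes by removing all blocks at rescaled `L^∞`-distance `1` from the
complement -/
def Fnt : Set (Finset I3) :=
  {B | ∃ A : Finset I3, A.Nonempty ∧
        B = (A.biUnion smoothBlocks).filter
              (fun ξ => ¬ nearBoundary (A.biUnion smoothBlocks) 1 ξ) ∧
        DConn B}

/-- the one-point function of the pure type-`q` plate gas in `S`: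
`Z^q(S)^{-1} ∫_{Ω^q_S} dP z^{|P|+1} φ({p₀} ∪ P)` -/
def corrPure (k α z : ℝ) (S : Set Pt) (q : Fin 3) (p₀ : Plate) : ℝ :=
  (ZGen k α z S (typeOrients q))⁻¹ *
    ∑' n : ℕ, (z ^ (n + 1) / (Nat.factorial n : ℝ)) *
      ∫ x : Fin n → Pt in Set.univ.pi (fun _ => S),
        ∑ b : Fin n → Bool, phiL k α (p₀ :: mkConf x (fun m => (q, b m)))

end

/-!
The integrand vanishes unless some plate is centered near `Γ`, and for `n ≥ 2` plates the Ursell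
function is bounded by the number of spanning trees of their intersection graph
(deletion–contraction). Rooting a tree at a plate near `Γ`, every other plate is centered in a slab
of volume `8k²` around its parent, because plates of type `q` are thin along the axis `q`; the root
ranges over a set of volume `O(k³|Γ|)`. Integrating leaf by leaf, the `n`-plate term is at most
`2k|Γ| (96 z k²)ⁿ`: the `2ⁿ` orientations and the `n · nⁿ` rooted parent maps are absorbed by `n!`.
The one-plate term is nonnegative, so `-∫ φᵀ z^{|P|} F_γ` is bounded by the geometric tail over
`n ≥ 2`, which is `O((zk³)(zk²)|Γ|)` once `96 z k² ≤ 1/2`.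
-/

noncomputable section

section ContractedConnectivity

variable {V : Type*}

/-- adjacency in the multigraph with edge set `E` in which all vertices with the same
label `κ` are identified -/
def ContractAdj (κ : V → V) (E : Finset (V × V)) (x y : V) : Prop :=
  κ x = κ y ∨ (x, y) ∈ E ∨ (y, x) ∈ E

def ConnectsMod (κ : V → V) (E : Finset (V × V)) : Prop :=
  ∀ a b : V, Relation.ReflTransGen (ContractAdj κ E) a b

def connAltSum (κ : V → V) (G : Finset (V × V)) : ℝ :=
  ∑ E ∈ G.powerset, if ConnectsMod κ E then (-1 : ℝ) ^ E.card else 0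

/-- contraction of the edge `e` -/
def mergeLabels (κ : V → V) (e : V × V) : V → V :=
  fun x => if κ x = κ e.2 then κ e.1 else κ x

lemma ContractAdj.symm {κ : V → V} {E : Finset (V × V)} {x y : V}
    (h : ContractAdj κ E x y) : ContractAdj κ E y x := by
  rcases h with h | h | h
  exacts [Or.inl h.symm, Or.inr (Or.inr h), Or.inr (Or.inl h)]

lemma ConnectsMod.of_contractAdj {κ κ' : V → V} {E E' : Finset (V × V)}
    (h : ∀ x y, ContractAdj κ E x y → Relation.ReflTransGen (ContractAdj κ' E') x y)
    (hE : ConnectsMod κ E) : ConnectsMod κ' E' :=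
  fun a b => Relation.ReflTransGen.lift' id h a b (hE a b)

lemma connectsMod_insert_iff (κ : V → V) (e : V × V) (S : Finset (V × V)) :
    ConnectsMod κ (insert e S) ↔ ConnectsMod (mergeLabels κ e) S := by
  have he : ContractAdj κ (insert e S) e.1 e.2 := Or.inr (Or.inl (Finset.mem_insert_self e S))
  constructor
  · refine ConnectsMod.of_contractAdj fun x y hxy => .single ?_
    rcases hxy with hk | hm | hm
    · exact Or.inl (by simp [mergeLabels, hk])
    all_goals rcases Finset.mem_insert.1 hm with rfl | hm
    · exact Or.inl (by simp [mergeLabels])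
    · exact Or.inr (Or.inl hm)
    · exact Or.inl (by simp [mergeLabels])
    · exact Or.inr (Or.inr hm)
  · have hl : ∀ {a b}, κ a = κ b → ContractAdj κ (insert e S) a b := Or.inl
    refine ConnectsMod.of_contractAdj fun x y hxy => ?_
    rcases hxy with hk | hm | hm
    · simp only [mergeLabels] at hk
      split_ifs at hk with hx hy hy
      · exact .single (hl (hx.trans hy.symm))
      · exact ((Relation.ReflTransGen.single (hl hx)).tail he.symm).tail (hl hk)
      · exact ((Relation.ReflTransGen.single (hl hk)).tail he).tail (hl hy.symm)
      · exact .single (hl hk)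
    · exact .single (Or.inr (Or.inl (Finset.mem_insert_of_mem hm)))
    · exact .single (Or.inr (Or.inr (Finset.mem_insert_of_mem hm)))

lemma connectsMod_iff_of_forall_loop {κ : V → V} {E : Finset (V × V)}
    (hE : ∀ e ∈ E, κ e.1 = κ e.2) : ConnectsMod κ E ↔ ConnectsMod κ ∅ := by
  constructor <;> refine ConnectsMod.of_contractAdj fun x y hxy => .single ?_
  · rcases hxy with hk | hm | hm
    exacts [Or.inl hk, Or.inl (hE _ hm), Or.inl (hE _ hm).symm]
  · rcases hxy with hk | hm | hm
    exacts [Or.inl hk, absurd hm (Finset.notMem_empty _), absurd hm (Finset.notMem_empty _)]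

lemma ConnectsMod.label_eq {κ : V → V} (h : ConnectsMod κ ∅) (a b : V) : κ a = κ b := by
  induction h a b with
  | refl => rfl
  | tail _ hstep ih =>
    rcases hstep with hk | hm | hm
    exacts [ih.trans hk, absurd hm (Finset.notMem_empty _), absurd hm (Finset.notMem_empty _)]

lemma connAltSum_eq_sub {κ : V → V} {G : Finset (V × V)} {e : V × V} (heG : e ∈ G) :
    connAltSum κ G = connAltSum κ (G.erase e) - connAltSum (mergeLabels κ e) (G.erase e) := by
  conv_lhs => rw [connAltSum, ← Finset.insert_erase heG]
  rw [Finset.sum_powerset_insert (Finset.notMem_erase e G), sub_eq_add_neg, connAltSum,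
    connAltSum, ← Finset.sum_neg_distrib]
  congr 1
  refine Finset.sum_congr rfl fun S hS => ?_
  have heS : e ∉ S := fun h => Finset.notMem_erase e G (Finset.mem_powerset.1 hS h)
  rw [connectsMod_insert_iff, Finset.card_insert_of_notMem heS, pow_succ]
  split_ifs <;> ring

lemma connAltSum_of_forall_loop {κ : V → V} {G : Finset (V × V)}
    (hG : ∀ e ∈ G, κ e.1 = κ e.2) :
    connAltSum κ G = if ConnectsMod κ ∅ ∧ G = ∅ then 1 else 0 := by
  have hiff : ∀ E ∈ G.powerset, ConnectsMod κ E ↔ ConnectsMod κ ∅ := fun E hE =>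
    connectsMod_iff_of_forall_loop fun e he => hG e (Finset.mem_powerset.1 hE he)
  rw [connAltSum, Finset.sum_congr rfl fun E hE => by rw [if_congr (hiff E hE) rfl rfl]]
  by_cases hc : ConnectsMod κ ∅
  · have h := Finset.sum_powerset_neg_one_pow_card (x := G)
    simp only [hc, if_true, true_and]
    split_ifs at h ⊢ <;> exact_mod_cast h
  · simp [hc]

variable [Fintype V]

def labelCount (κ : V → V) : ℕ := (Finset.univ.image κ).card

/-- the spanning trees of the multigraph `G` with the vertices of equal label identified -/
def spanningTreesMod (κ : V → V) (G : Finset (V × V)) : Finset (Finset (V × V)) :=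
  G.powerset.filter fun E => ConnectsMod κ E ∧ E.card + 1 = labelCount κ

lemma ConnectsMod.labelCount_eq_one [Nonempty V] {κ : V → V} (h : ConnectsMod κ ∅) :
    labelCount κ = 1 := by
  obtain ⟨v⟩ := ‹Nonempty V›
  rw [labelCount, Finset.card_eq_one]
  refine ⟨κ v, Finset.eq_singleton_iff_unique_mem.2 ⟨by simp, ?_⟩⟩
  simp only [Finset.mem_image, Finset.mem_univ, true_and, forall_exists_index,
    forall_apply_eq_imp_iff]
  exact fun a => h.label_eq a v

lemma labelCount_mergeLabels {κ : V → V} {e : V × V} (he : κ e.1 ≠ κ e.2) :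
    labelCount (mergeLabels κ e) + 1 = labelCount κ := by
  have himage : Finset.univ.image (mergeLabels κ e) = (Finset.univ.image κ).erase (κ e.2) := by
    ext t
    simp only [Finset.mem_image, Finset.mem_erase, Finset.mem_univ, true_and, mergeLabels]
    constructor
    · rintro ⟨a, rfl⟩
      split_ifs with ha
      exacts [⟨he, e.1, rfl⟩, ⟨ha, a, rfl⟩]
    · rintro ⟨ht, a, rfl⟩
      exact ⟨a, if_neg ht⟩
  rw [labelCount, labelCount, himage, Finset.card_erase_add_one (by simp)]

lemma card_spanningTreesMod_erase_add_le {κ : V → V} {G : Finset (V × V)} {e : V × V}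
    (heG : e ∈ G) (he : κ e.1 ≠ κ e.2) :
    (spanningTreesMod κ (G.erase e)).card + (spanningTreesMod (mergeLabels κ e) (G.erase e)).card
      ≤ (spanningTreesMod κ G).card := by
  have hnot : ∀ {E}, E ∈ (G.erase e).powerset → e ∉ E := fun hE h =>
    Finset.notMem_erase e G (Finset.mem_powerset.1 hE h)
  rw [← Finset.card_image_of_injOn (f := insert e)
    (s := spanningTreesMod (mergeLabels κ e) (G.erase e))
    (fun E₁ h₁ E₂ h₂ h => by
      simpa [Finset.erase_insert (hnot (Finset.mem_filter.1 h₁).1),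
        Finset.erase_insert (hnot (Finset.mem_filter.1 h₂).1)] using congrArg (·.erase e) h),
    ← Finset.card_union_of_disjoint]
  · refine Finset.card_le_card fun E hE => ?_
    simp only [spanningTreesMod, Finset.mem_union, Finset.mem_filter, Finset.mem_image,
      Finset.mem_powerset] at hE ⊢
    rcases hE with ⟨hsub, hE⟩ | ⟨E, h, rfl⟩
    · exact ⟨hsub.trans (Finset.erase_subset e G), hE⟩
    · obtain ⟨hsub, hconn, hcard⟩ := h
      refine ⟨Finset.insert_subset heG (hsub.trans (Finset.erase_subset e G)),
        (connectsMod_insert_iff κ e E).2 hconn, ?_⟩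
      rw [Finset.card_insert_of_notMem (hnot (Finset.mem_powerset.2 hsub)),
        ← labelCount_mergeLabels he, hcard]
  · refine Finset.disjoint_left.2 fun E hE hE' => ?_
    obtain ⟨E', -, rfl⟩ := Finset.mem_image.1 hE'
    exact hnot (Finset.mem_filter.1 hE).1 (Finset.mem_insert_self e E')

theorem abs_connAltSum_le_card_spanningTreesMod [Nonempty V] (G : Finset (V × V)) (κ : V → V) :
    |connAltSum κ G| ≤ (spanningTreesMod κ G).card := by
  induction G using Finset.strongInduction generalizing κ with
  | _ G ih =>
  by_cases hloop : ∃ e ∈ G, κ e.1 ≠ κ e.2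
  · obtain ⟨e, heG, he⟩ := hloop
    have hlt := Finset.erase_ssubset heG
    calc |connAltSum κ G|
        ≤ |connAltSum κ (G.erase e)| + |connAltSum (mergeLabels κ e) (G.erase e)| := by
          rw [connAltSum_eq_sub heG]; exact abs_sub _ _
      _ ≤ (spanningTreesMod κ (G.erase e)).card
            + (spanningTreesMod (mergeLabels κ e) (G.erase e)).card :=
          add_le_add (ih _ hlt κ) (ih _ hlt _)
      _ ≤ (spanningTreesMod κ G).card := by
          exact_mod_cast card_spanningTreesMod_erase_add_le heG he
  · push Not at hloop
    rw [connAltSum_of_forall_loop hloop]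
    split_ifs with h
    · obtain ⟨hc, rfl⟩ := h
      have : (∅ : Finset (V × V)) ∈ spanningTreesMod κ ∅ := by
        simp [spanningTreesMod, hc, hc.labelCount_eq_one]
      rw [abs_one, Nat.one_le_cast]
      exact Finset.card_pos.2 ⟨_, this⟩
    · simp

end ContractedConnectivity

section ParentMaps

variable {V : Type*}

def edgeGraph (E : Finset (V × V)) : SimpleGraph V := SimpleGraph.fromRel fun i j => (i, j) ∈ E

lemma edgeGraph_connected_iff [Nonempty V] (E : Finset (V × V)) :
    (edgeGraph E).Connected ↔ ConnectsMod id E := by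
  constructor
  · intro h a b
    refine Relation.ReflTransGen.lift' id (fun x y hxy => .single ?_) a b
      ((SimpleGraph.reachable_iff_reflTransGen a b).1 (h.preconnected a b))
    exact Or.inr hxy.2
  · intro h
    refine ⟨fun a b => ?_⟩
    induction h a b with
    | refl => rfl
    | @tail x y _ hstep ih =>
      by_cases hxy : x = y
      · exact hxy ▸ ih
      rcases hstep with hk | hm
      exacts [absurd hk hxy, ih.trans (SimpleGraph.Adj.reachable ⟨hxy, hm⟩)]

/-- No nonempty subset of `s` is mapped into itself by `ρ`, i.e. `ρ` has no cycle inside `s`. -/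
def AcyclicOn (ρ : V → V) (s : Finset V) : Prop :=
  ∀ t ⊆ s, t.Nonempty → ∃ v ∈ t, ρ v ∉ t

def parentTowards (H : SimpleGraph V) (r v : V) : V :=
  if h : ∃ u, H.Adj v u ∧ H.dist u r < H.dist v r then h.choose else r

lemma parentTowards_spec {H : SimpleGraph V} (hH : H.Connected) {r v : V} (hv : v ≠ r) :
    H.Adj v (parentTowards H r v) ∧ H.dist (parentTowards H r v) r < H.dist v r := by
  have hex : ∃ u, H.Adj v u ∧ H.dist u r < H.dist v r := by
    obtain ⟨w, hw⟩ := (hH.preconnected v r).exists_walk_length_eq_dist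
    cases w with
    | nil => exact absurd rfl hv
    | cons hadj w =>
      refine ⟨_, hadj, ?_⟩
      have := SimpleGraph.dist_le w
      rw [SimpleGraph.Walk.length_cons] at hw
      omega
  rw [parentTowards, dif_pos hex]
  exact hex.choose_spec

lemma acyclicOn_parentTowards [Fintype V] [DecidableEq V] {H : SimpleGraph V}
    (hH : H.Connected) (r : V) : AcyclicOn (parentTowards H r) (Finset.univ.erase r) := by
  intro t ht htne
  obtain ⟨v, hvt, hvmin⟩ := Finset.exists_min_image t (H.dist · r) htne
  refine ⟨v, hvt, fun hpt => ?_⟩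
  have := (parentTowards_spec hH (Finset.ne_of_mem_erase (ht hvt))).2
  have := hvmin _ hpt
  omega

variable [LinearOrder V]

lemma inf_sup_mem_of_edgeGraph_adj {E : Finset (V × V)} (hE : ∀ e ∈ E, e.1 < e.2) {v u : V}
    (h : (edgeGraph E).Adj v u) : (v ⊓ u, v ⊔ u) ∈ E := by
  obtain ⟨-, hm | hm⟩ := (SimpleGraph.fromRel_adj _ v u).1 h
  · have := (hE _ hm).le
    rwa [inf_eq_left.2 this, sup_eq_right.2 this]
  · have := (hE _ hm).le
    rwa [inf_eq_right.2 this, sup_eq_left.2 this]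

/-- Two vertices with the same pair `{v, ρ v}` would be each other's parent. -/
lemma injOn_inf_sup_of_lt {ρ : V → V} {d : V → ℕ} {s : Set V} (hd : ∀ v ∈ s, d (ρ v) < d v) :
    Set.InjOn (fun v => (v ⊓ ρ v, v ⊔ ρ v)) s := by
  intro v hv w hw hvw
  obtain ⟨hinf, hsup⟩ := Prod.mk.inj hvw
  rcases Sym2.eq_iff.1 (Sym2.inf_eq_inf_and_sup_eq_sup.1 ⟨hinf, hsup⟩) with h | ⟨hvw, hwv⟩
  · exact h.1
  have := hd v hv
  have := hd w hw
  rw [hwv] at *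
  rw [← hvw] at *
  omega

/-- A tree is the set of edges joining each non-root vertex to its parent. -/
lemma eq_image_parentTowards [Fintype V] [DecidableEq V] {E : Finset (V × V)}
    (hE : ∀ e ∈ E, e.1 < e.2) (hconn : (edgeGraph E).Connected)
    (hcard : E.card + 1 = Fintype.card V) (r : V) :
    E = (Finset.univ.erase r).image fun v =>
      (v ⊓ parentTowards (edgeGraph E) r v, v ⊔ parentTowards (edgeGraph E) r v) := by
  have hinj := injOn_inf_sup_of_lt (ρ := parentTowards (edgeGraph E) r)
    (d := ((edgeGraph E).dist · r)) (s := ↑(Finset.univ.erase r)) fun v hv =>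
    (parentTowards_spec hconn (Finset.ne_of_mem_erase hv)).2
  refine (Finset.eq_of_subset_of_card_le (fun e he => ?_) ?_).symm
  · obtain ⟨v, hv, rfl⟩ := Finset.mem_image.1 he
    exact inf_sup_mem_of_edgeGraph_adj hE (parentTowards_spec hconn (Finset.ne_of_mem_erase hv)).1
  · rw [Finset.card_image_of_injOn hinj, Finset.card_erase_of_mem (Finset.mem_univ r),
      Finset.card_univ]
    omega

variable [Fintype V]

def sortedEdges (R : V → V → Prop) : Finset (V × V) :=
  Finset.univ.filter fun e => e.1 < e.2 ∧ R e.1 e.2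

lemma mem_sortedEdges {R : V → V → Prop} {e : V × V} :
    e ∈ sortedEdges R ↔ e.1 < e.2 ∧ R e.1 e.2 := by
  simp [sortedEdges]

lemma rel_of_inf_sup_mem_sortedEdges {R : V → V → Prop} (hR : ∀ a b, R a b → R b a) {v u : V}
    (h : (v ⊓ u, v ⊔ u) ∈ sortedEdges R) : R v u := by
  have hR' := (mem_sortedEdges.1 h).2
  rcases le_total v u with hvu | huv
  · rwa [inf_eq_left.2 hvu, sup_eq_right.2 hvu] at hR'
  · rw [inf_eq_right.2 huv, sup_eq_left.2 huv] at hR'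
    exact hR _ _ hR'

/-- A spanning tree of the graph of `R` is determined by the map sending each vertex to its
parent towards the root `r`. -/
theorem card_spanningTreesMod_id_le_card_parentMaps [DecidableEq V] {R : V → V → Prop}
    (hR : ∀ a b, R a b → R b a) (r : V) :
    (spanningTreesMod id (sortedEdges R)).card ≤
      (Finset.univ.filter fun ρ : V → V =>
        AcyclicOn ρ (Finset.univ.erase r) ∧ ∀ v ≠ r, R v (ρ v)).card := by
  have : Nonempty V := ⟨r⟩
  have htree : ∀ E ∈ spanningTreesMod id (sortedEdges R), E ⊆ sortedEdges R ∧
      (edgeGraph E).Connected ∧ E.card + 1 = Fintype.card V := by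
    intro E hE
    simp only [spanningTreesMod, Finset.mem_filter, Finset.mem_powerset, labelCount,
      Finset.image_id, Finset.card_univ] at hE
    exact ⟨hE.1, (edgeGraph_connected_iff E).2 hE.2.1, hE.2.2⟩
  have hsorted : ∀ E ∈ spanningTreesMod id (sortedEdges R), ∀ e ∈ E, e.1 < e.2 :=
    fun E hE e he => (mem_sortedEdges.1 ((htree E hE).1 he)).1
  refine Finset.card_le_card_of_injOn (fun E => parentTowards (edgeGraph E) r)
    (fun E hE => ?_) fun E₁ h₁ E₂ h₂ heq => ?_
  · obtain ⟨hsub, hconn, -⟩ := htree E hE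
    refine Finset.mem_filter.2 ⟨Finset.mem_univ _, acyclicOn_parentTowards hconn r,
      fun v hv => rel_of_inf_sup_mem_sortedEdges hR (hsub ?_)⟩
    exact inf_sup_mem_of_edgeGraph_adj (hsorted E hE) (parentTowards_spec hconn hv).1
  · rw [eq_image_parentTowards (hsorted E₁ h₁) (htree E₁ h₁).2.1 (htree E₁ h₁).2.2 r,
      eq_image_parentTowards (hsorted E₂ h₂) (htree E₂ h₂).2.1 (htree E₂ h₂).2.2 r]
    simp only at heq
    rw [heq]

end ParentMaps

section TreeIntegrals

open scoped ENNReal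

lemma lmarginal_mul_left_of_dependsOn_compl {δ : Type*} [DecidableEq δ] {X : δ → Type*}
    [∀ i, MeasurableSpace (X i)] (μ : ∀ i, Measure (X i)) {s : Finset δ}
    {c f : (∀ i, X i) → ℝ≥0∞} (hc : DependsOn c (↑s)ᶜ) (hf : Measurable f) (x : ∀ i, X i) :
    (∫⋯∫⁻_s, (fun z => c z * f z) ∂μ) x = c x * (∫⋯∫⁻_s, f ∂μ) x := by
  simp only [lmarginal]
  rw [← lintegral_const_mul (c x) (f := fun y => f (Function.updateFinset x s y))
    (hf.comp measurable_updateFinset)]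
  refine lintegral_congr fun y => ?_
  rw [hc (y := x) fun i hi => by simp [Function.updateFinset, Finset.mem_coe.not.1 hi]]

lemma measurable_prod_parent {δ X : Type*} [MeasurableSpace X] {g : X → X → ℝ≥0∞}
    (hg : Measurable (Function.uncurry g)) (ρ : δ → δ) (t : Finset δ) :
    Measurable fun z : δ → X => ∏ v ∈ t, g (z (ρ v)) (z v) :=
  Finset.measurable_prod _ fun v _ => hg.comp (f := fun z : δ → X => (z (ρ v), z v)) (by fun_prop)

variable {δ X : Type*} [DecidableEq δ] [MeasurableSpace X] {μ : Measure X} [SigmaFinite μ]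
  {g : X → X → ℝ≥0∞} {M : ℝ≥0∞}

/-- Integrate out the vertices of `s` leaf by leaf: a vertex whose parent lies outside the
remaining set contributes a factor at most `M`. -/
theorem lmarginal_prod_le_pow (hg : Measurable (Function.uncurry g))
    (hM : ∀ c, ∫⁻ y, g c y ∂μ ≤ M) {ρ : δ → δ} {s : Finset δ} (hρ : AcyclicOn ρ s)
    (x : δ → X) :
    (∫⋯∫⁻_s, (fun z => ∏ v ∈ s, g (z (ρ v)) (z v)) ∂fun _ => μ) x ≤ M ^ s.card := by
  induction s using Finset.strongInduction generalizing x with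
  | _ s ih =>
  rcases s.eq_empty_or_nonempty with rfl | hne
  · simp
  obtain ⟨v₀, hv₀, hρv₀⟩ := hρ s subset_rfl hne
  have hv₀' : v₀ ∉ s.erase v₀ := Finset.notMem_erase v₀ s
  have hρv₀' : ρ v₀ ∉ s.erase v₀ := fun h => hρv₀ (Finset.mem_of_mem_erase h)
  have hdep : DependsOn (fun z : δ → X => g (z (ρ v₀)) (z v₀)) (↑(s.erase v₀))ᶜ :=
    fun z z' h => by
      simp only [h _ (Finset.mem_coe.not.2 hρv₀'), h _ (Finset.mem_coe.not.2 hv₀')]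
  have hleaf : ∀ y, (∫⋯∫⁻_s.erase v₀, (fun z => ∏ v ∈ s, g (z (ρ v)) (z v)) ∂fun _ => μ)
      (Function.update x v₀ y) ≤ g (x (ρ v₀)) y * M ^ (s.erase v₀).card := by
    intro y
    simp_rw [← Finset.mul_prod_erase s _ hv₀]
    rw [lmarginal_mul_left_of_dependsOn_compl _ hdep (measurable_prod_parent hg ρ _),
      Function.update_self, Function.update_of_ne fun h => hρv₀ (by rwa [h])]
    exact mul_le_mul_right (ih _ (Finset.erase_ssubset hv₀)
      (fun t ht => hρ t (ht.trans (Finset.erase_subset v₀ s))) _) _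
  calc (∫⋯∫⁻_s, (fun z => ∏ v ∈ s, g (z (ρ v)) (z v)) ∂fun _ => μ) x
      = ∫⁻ y, (∫⋯∫⁻_s.erase v₀, (fun z => ∏ v ∈ s, g (z (ρ v)) (z v)) ∂fun _ => μ)
          (Function.update x v₀ y) ∂μ := lmarginal_erase _ (measurable_prod_parent hg ρ s) hv₀ x
    _ ≤ ∫⁻ y, g (x (ρ v₀)) y * M ^ (s.erase v₀).card ∂μ := lintegral_mono hleaf
    _ ≤ M * M ^ (s.erase v₀).card := by
        have : Measurable (g (x (ρ v₀))) := hg.comp (f := fun y => (x (ρ v₀), y)) (by fun_prop)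
        rw [lintegral_mul_const _ this]
        gcongr
        exact hM _
    _ = M ^ s.card := by rw [← pow_succ', Finset.card_erase_add_one hv₀]

theorem lintegral_rooted_prod_le [Fintype δ] {f : X → ℝ≥0∞} (hf : Measurable f)
    (hg : Measurable (Function.uncurry g)) (hM : ∀ c, ∫⁻ y, g c y ∂μ ≤ M) {ρ : δ → δ} {r : δ}
    (hρ : AcyclicOn ρ (Finset.univ.erase r)) :
    ∫⁻ z, f (z r) * ∏ v ∈ Finset.univ.erase r, g (z (ρ v)) (z v) ∂(Measure.pi fun _ => μ)
      ≤ (∫⁻ y, f y ∂μ) * M ^ (Fintype.card δ - 1) := by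
  rcases isEmpty_or_nonempty X with hX | ⟨⟨x₀⟩⟩
  · have : IsEmpty (δ → X) := ⟨fun z => hX.false (z r)⟩
    simp
  have hr : r ∉ Finset.univ.erase r := Finset.notMem_erase r _
  have hprod := measurable_prod_parent hg ρ (Finset.univ.erase r)
  have hF : Measurable fun z : δ → X => f (z r) * ∏ v ∈ Finset.univ.erase r, g (z (ρ v)) (z v) :=
    (hf.comp (measurable_pi_apply r)).mul hprod
  rw [lintegral_eq_lmarginal_univ (fun _ => x₀), lmarginal_erase _ hF (Finset.mem_univ r)]
  calc ∫⁻ y, (∫⋯∫⁻_Finset.univ.erase r, (fun z => f (z r) *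
          ∏ v ∈ Finset.univ.erase r, g (z (ρ v)) (z v)) ∂fun _ => μ)
          (Function.update (fun _ => x₀) r y) ∂μ
      ≤ ∫⁻ y, f y * M ^ (Finset.univ.erase r).card ∂μ := by
        refine lintegral_mono fun y => ?_
        rw [lmarginal_mul_left_of_dependsOn_compl _
          (fun z z' h => by rw [h _ (Finset.mem_coe.not.2 hr)]) hprod, Function.update_self]
        exact mul_le_mul_right (lmarginal_prod_le_pow hg hM hρ _) _
    _ = (∫⁻ y, f y ∂μ) * M ^ (Fintype.card δ - 1) := by
        rw [lintegral_mul_const _ hf, Finset.card_erase_of_mem (Finset.mem_univ r),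
          Finset.card_univ]

def rootedTreeSum [Fintype δ] (f : X → ℝ≥0∞) (g : X → X → ℝ≥0∞) (z : δ → X) : ℝ≥0∞ :=
  ∑ r, f (z r) * ∑ ρ ∈ Finset.univ.filter fun ρ : δ → δ => AcyclicOn ρ (Finset.univ.erase r),
    ∏ v ∈ Finset.univ.erase r, g (z (ρ v)) (z v)

theorem lintegral_rootedTreeSum_le [Fintype δ] {f : X → ℝ≥0∞} (hf : Measurable f)
    (hg : Measurable (Function.uncurry g)) (hM : ∀ c, ∫⁻ y, g c y ∂μ ≤ M) :
    ∫⁻ z : δ → X, rootedTreeSum f g z ∂(Measure.pi fun _ => μ)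
      ≤ Fintype.card δ * (Fintype.card δ ^ Fintype.card δ *
          ((∫⁻ y, f y ∂μ) * M ^ (Fintype.card δ - 1))) := by
  have hmeas : ∀ r (ρ : δ → δ), Measurable fun z : δ → X =>
      f (z r) * ∏ v ∈ Finset.univ.erase r, g (z (ρ v)) (z v) := fun r ρ =>
    (hf.comp (measurable_pi_apply r)).mul (measurable_prod_parent hg ρ _)
  simp only [rootedTreeSum, Finset.mul_sum]
  rw [lintegral_finsetSum _ fun r _ => Finset.measurable_sum _ fun ρ _ => hmeas r ρ]
  calc ∑ r, ∫⁻ z, ∑ ρ ∈ Finset.univ.filter fun ρ : δ → δ => AcyclicOn ρ (Finset.univ.erase r),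
          f (z r) * ∏ v ∈ Finset.univ.erase r, g (z (ρ v)) (z v) ∂(Measure.pi fun _ => μ)
      ≤ ∑ _r : δ, ∑ _ρ : δ → δ, (∫⁻ y, f y ∂μ) * M ^ (Fintype.card δ - 1) := by
        refine Finset.sum_le_sum fun r _ => ?_
        rw [lintegral_finsetSum _ fun ρ _ => hmeas r ρ]
        refine (Finset.sum_le_sum fun ρ hρ =>
          lintegral_rooted_prod_le hf hg hM (Finset.mem_filter.1 hρ).2).trans ?_
        exact Finset.sum_le_sum_of_subset (Finset.filter_subset _ _)
    _ = _ := by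
        simp only [Finset.sum_const, Finset.card_univ, Fintype.card_fun, nsmul_eq_mul,
          Nat.cast_pow]

end TreeIntegrals

section PlateGeometry

open Metric
open scoped ENNReal

variable {k α : ℝ}

lemma Intersects.symm {p p' : Plate} (h : Intersects k α p p') : Intersects k α p' p := by
  obtain ⟨y, hy, hy'⟩ := h
  exact ⟨y, hy', hy⟩

lemma Intersects.abs_center_sub_le {p p' : Plate} (h : Intersects k α p p') (j : Fin 3) :
    |p.1 j - p'.1 j| ≤ (sideLen k α p.2 j + sideLen k α p'.2 j) / 2 := by
  obtain ⟨y, hy, hy'⟩ := h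
  have h₁ : |y j - p.1 j| ≤ sideLen k α p.2 j / 2 := hy j
  have h₂ : |y j - p'.1 j| ≤ sideLen k α p'.2 j / 2 := hy' j
  have := abs_sub_le (p.1 j) (y j) (p'.1 j)
  rw [abs_sub_comm (p.1 j) (y j)] at this
  linarith

lemma sideLen_le (hk : 1 ≤ k) (hα : α ≤ 1) (o : Orient) (j : Fin 3) : sideLen k α o j ≤ k := by
  have : k ^ α ≤ k := by simpa using Real.rpow_le_rpow_of_exponent_le hk hα
  unfold sideLen
  split_ifs <;> linarith

lemma Intersects.dist_le (hk : 1 ≤ k) (hα : α ≤ 1) {p p' : Plate} (h : Intersects k α p p') :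
    dist p.1 p'.1 ≤ k :=
  (dist_pi_le_iff (by linarith)).2 fun j => by
    rw [Real.dist_eq]
    linarith [h.abs_center_sub_le j, sideLen_le hk hα p.2 j, sideLen_le hk hα p'.2 j]

/-- Plates of type `q` are thin along the axis `q`, so the centers of two intersecting ones
differ by at most `1` along `q` and by at most `k` along the other axes. -/
def slabHalfWidth (k : ℝ) (q : Fin 3) : Pt := fun j => if j = q then 1 else k

lemma Intersects.mem_Icc_slabHalfWidth (hk : 1 ≤ k) (hα : α ≤ 1) {q : Fin 3} {b b' : Bool}
    {y y' : Pt} (h : Intersects k α (y, (q, b)) (y', (q, b'))) :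
    y ∈ Set.Icc (y' - slabHalfWidth k q) (y' + slabHalfWidth k q) := by
  have hj : ∀ j, |y j - y' j| ≤ slabHalfWidth k q j := fun j => by
    by_cases hjq : j = q
    · subst hjq
      simpa [slabHalfWidth, sideLen] using h.abs_center_sub_le j
    · rw [slabHalfWidth, if_neg hjq, ← Real.dist_eq]
      exact (dist_le_pi_dist y y' j).trans (h.dist_le hk hα)
  refine ⟨fun j => ?_, fun j => ?_⟩ <;>
    simp only [Pi.sub_apply, Pi.add_apply] <;> linarith [abs_le.1 (hj j)]

lemma volume_Icc_slabHalfWidth (hk : 0 ≤ k) (q : Fin 3) (c : Pt) :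
    volume (Set.Icc (c - slabHalfWidth k q) (c + slabHalfWidth k q)) =
      ENNReal.ofReal (8 * k ^ 2) := by
  rw [Real.volume_Icc_pi, ← ENNReal.ofReal_prod_of_nonneg fun j _ => by
    simp only [Pi.add_apply, Pi.sub_apply, slabHalfWidth]; split_ifs <;> linarith]
  congr 1
  fin_cases q <;> simp [Fin.prod_univ_three, slabHalfWidth] <;> ring

def slabKernel (k : ℝ) (q : Fin 3) (c y : Pt) : ℝ≥0∞ :=
  if y ∈ Set.Icc (c - slabHalfWidth k q) (c + slabHalfWidth k q) then 1 else 0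

lemma measurable_slabKernel (k : ℝ) (q : Fin 3) :
    Measurable (Function.uncurry (slabKernel k q)) := by
  refine Measurable.ite ?_ measurable_const measurable_const
  exact (measurableSet_le (f := fun p : Pt × Pt => p.1 - slabHalfWidth k q) (g := Prod.snd)
    (by fun_prop) (by fun_prop)).inter
    (measurableSet_le (f := Prod.snd) (g := fun p : Pt × Pt => p.1 + slabHalfWidth k q)
    (by fun_prop) (by fun_prop))

lemma lintegral_slabKernel (hk : 0 ≤ k) (q : Fin 3) (c : Pt) :
    ∫⁻ y, slabKernel k q c y = ENNReal.ofReal (8 * k ^ 2) := by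
  rw [← volume_Icc_slabHalfWidth hk q c, ← lintegral_indicator_one measurableSet_Icc]
  refine lintegral_congr fun y => ?_
  simp [slabKernel, Set.indicator_apply]

def blockCenter (ℓ : ℝ) (ξ : I3) : Pt := fun j => ℓ * (ξ j + 1 / 2)

lemma dist_blockCenter_blockIdx_le {ℓ : ℝ} (hℓ : 0 < ℓ) (x : Pt) :
    dist x (blockCenter ℓ (blockIdx ℓ x)) ≤ ℓ / 2 := by
  refine (dist_pi_le_iff (by linarith)).2 fun j => ?_
  have h1 := Int.floor_le (x j / ℓ)
  have h2 := Int.lt_floor_add_one (x j / ℓ)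
  rw [le_div_iff₀ hℓ] at h1
  rw [div_lt_iff₀ hℓ] at h2
  rw [Real.dist_eq, abs_le, blockCenter, blockIdx]
  constructor <;> nlinarith

/-- Balls in `Pt` are cubes (sup metric); the radius `5k/4 = k/4 + k` covers every point at
distance `≤ k` from a block of `Γ`. -/
def contourNbhd (k : ℝ) (Γ : Finset I3) : Set Pt :=
  ⋃ ξ ∈ Γ, closedBall (blockCenter (k / 2) ξ) (5 * k / 4)

lemma measurableSet_contourNbhd (k : ℝ) (Γ : Finset I3) : MeasurableSet (contourNbhd k Γ) :=
  Finset.measurableSet_biUnion Γ fun _ _ => measurableSet_closedBall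

lemma mem_contourNbhd (hk : 0 < k) {Γ : Finset I3} {c y : Pt} (hc : blockIdx (k / 2) c ∈ Γ)
    (hy : dist y c ≤ k) : y ∈ contourNbhd k Γ :=
  Set.mem_biUnion hc <| mem_closedBall.2 <| (dist_triangle y c _).trans <| by
    linarith [dist_blockCenter_blockIdx_le (half_pos hk) c]

lemma volume_contourNbhd_le (hk : 0 ≤ k) (Γ : Finset I3) :
    volume (contourNbhd k Γ) ≤ Γ.card * ENNReal.ofReal ((5 * k / 2) ^ 3) := by
  refine (measure_biUnion_finset_le Γ _).trans_eq ?_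
  simp only [Real.volume_pi_closedBall _ (by linarith : (0 : ℝ) ≤ 5 * k / 4), Fintype.card_fin,
    Finset.sum_const, nsmul_eq_mul]
  ring_nf

end PlateGeometry

section DressingIntegrand

open scoped ENNReal

variable {k α : ℝ} {B Γ : Finset I3} {Pγ : List Plate}

lemma ursell_fin_one (k α : ℝ) (p : Fin 1 → Plate) : ursell k α p = 1 := by
  rw [ursell, Finset.sum_eq_single ∅ (fun E _ hE => if_neg fun h => ?_) (by simp)]
  · rw [if_pos ⟨by simp, ⟨fun a b => Subsingleton.elim a b ▸ .refl a⟩⟩, Finset.prod_empty]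
  · obtain ⟨e, he⟩ := Finset.nonempty_iff_ne_empty.2 hE
    exact (h.1 e he).ne (Subsingleton.elim _ _)

lemma ursell_eq_connAltSum (k α : ℝ) {N : ℕ} [NeZero N] (p : Fin N → Plate) :
    ursell k α p = connAltSum id (sortedEdges fun i j => Intersects k α (p i) (p j)) := by
  set G := sortedEdges fun i j => Intersects k α (p i) (p j)
  rw [ursell, connAltSum, ← Finset.sum_subset (Finset.subset_univ G.powerset)]
  · refine Finset.sum_congr rfl fun E hE => ?_
    have hsub := Finset.mem_powerset.1 hE
    have hsorted : ∀ e ∈ E, e.1 < e.2 := fun e he => (mem_sortedEdges.1 (hsub he)).1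
    have hfactor : ∀ e ∈ E, phi2 k α (p e.1) (p e.2) - 1 = -1 := fun e he => by
      rw [phi2, if_pos (mem_sortedEdges.1 (hsub he)).2]; ring
    rw [Finset.prod_congr rfl hfactor, Finset.prod_const]
    exact if_congr ((and_iff_right hsorted).trans (edgeGraph_connected_iff E)) rfl rfl
  · intro E _ hE
    refine ite_eq_right_iff.2 fun h => ?_
    obtain ⟨e, he, heG⟩ := Finset.not_subset.1 (mt Finset.mem_powerset.2 hE)
    refine Finset.prod_eq_zero he ?_
    have : ¬ Intersects k α (p e.1) (p e.2) := fun hint =>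
      heG (mem_sortedEdges.2 ⟨h.1 e he, hint⟩)
    rw [phi2, if_neg this, sub_self]

lemma FgamL_eq_zero_or_one (k α : ℝ) (B Γ : Finset I3) (Pγ P : List Plate) :
    FgamL k α B Γ Pγ P = 0 ∨ FgamL k α B Γ Pγ P = 1 := by
  unfold FgamL
  split_ifs <;> simp

lemma exists_mem_contourNbhd_of_FgamL_ne_zero (hk : 1 < k) (hα : α ≤ 1)
    (hPγ : ∀ p ∈ Pγ, blockIdx (k / 2) p.1 ∈ Γ) {N : ℕ} {x : Fin N → Pt} {o : Fin N → Orient}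
    (hF : FgamL k α B Γ Pγ (mkConf x o) ≠ 0) : ∃ i, x i ∈ contourNbhd k Γ := by
  unfold FgamL at hF
  split_ifs at hF with h
  · rcases h with ⟨-, -, p, hp, -, hpΓ⟩ | ⟨p, hp, -, p', hp', hpp'⟩
    all_goals obtain ⟨i, rfl⟩ := List.mem_ofFn.1 hp
    · exact ⟨i, mem_contourNbhd (by linarith) hpΓ (by rw [dist_self]; linarith)⟩
    · exact ⟨i, mem_contourNbhd (by linarith) (hPγ p' hp') (hpp'.dist_le hk.le hα)⟩
  · exact absurd rfl hF

/-- Root the spanning trees of the intersection graph at a plate near `Γ`: every other plate is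
then centered in a thin slab around its parent. -/
lemma ofReal_abs_ursell_mul_FgamL_le (hk : 1 < k) (hα : α ≤ 1) (q : Fin 3)
    (hPγ : ∀ p ∈ Pγ, blockIdx (k / 2) p.1 ∈ Γ) {N : ℕ} [NeZero N] (x : Fin N → Pt)
    (b : Fin N → Bool) :
    ENNReal.ofReal |ursell k α (fun m => (x m, (q, b m))) *
        FgamL k α B Γ Pγ (mkConf x fun m => (q, b m))|
      ≤ rootedTreeSum ((contourNbhd k Γ).indicator 1) (slabKernel k q) x := by
  rcases FgamL_eq_zero_or_one k α B Γ Pγ (mkConf x fun m => (q, b m)) with hF | hF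
  · simp [hF]
  obtain ⟨r, hr⟩ := exists_mem_contourNbhd_of_FgamL_ne_zero hk hα hPγ (hF ▸ one_ne_zero)
  set p : Fin N → Plate := fun m => (x m, (q, b m))
  have hslab : ∀ ρ : Fin N → Fin N, (∀ v ≠ r, Intersects k α (p v) (p (ρ v))) →
      ∏ v ∈ Finset.univ.erase r, slabKernel k q (x (ρ v)) (x v) = 1 := fun ρ hρ =>
    Finset.prod_eq_one fun v hv =>
      if_pos ((hρ v (Finset.ne_of_mem_erase hv)).mem_Icc_slabHalfWidth hk.le hα)
  rw [hF, mul_one, ursell_eq_connAltSum]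
  calc ENNReal.ofReal |connAltSum id (sortedEdges fun i j => Intersects k α (p i) (p j))|
      ≤ (spanningTreesMod id (sortedEdges fun i j => Intersects k α (p i) (p j))).card := by
        rw [← ENNReal.ofReal_natCast]
        exact ENNReal.ofReal_le_ofReal (abs_connAltSum_le_card_spanningTreesMod _ _)
    _ ≤ (Finset.univ.filter fun ρ : Fin N → Fin N => AcyclicOn ρ (Finset.univ.erase r) ∧
          ∀ v ≠ r, Intersects k α (p v) (p (ρ v))).card :=
        Nat.cast_le.2 <| by
          convert card_spanningTreesMod_id_le_card_parentMaps
            (R := fun i j => Intersects k α (p i) (p j)) (fun _ _ => Intersects.symm) r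
    _ ≤ ∑ ρ ∈ Finset.univ.filter fun ρ : Fin N → Fin N => AcyclicOn ρ (Finset.univ.erase r),
          ∏ v ∈ Finset.univ.erase r, slabKernel k q (x (ρ v)) (x v) := by
        rw [Finset.card_eq_sum_ones, Nat.cast_sum, Nat.cast_one]
        refine (Finset.sum_le_sum fun ρ hρ => (hslab ρ (Finset.mem_filter.1 hρ).2.2).ge).trans ?_
        exact Finset.sum_le_sum_of_subset fun ρ hρ =>
          Finset.mem_filter.2 ⟨Finset.mem_univ ρ, (Finset.mem_filter.1 hρ).2.1⟩
    _ ≤ rootedTreeSum ((contourNbhd k Γ).indicator 1) (slabKernel k q) x := by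
        refine le_of_eq_of_le ?_ (Finset.single_le_sum (fun _ _ => zero_le) (Finset.mem_univ r))
        rw [Set.indicator_of_mem hr, Pi.one_apply, one_mul]

lemma abs_integral_ursell_mul_FgamL_le (hk : 1 < k) (hα : α ≤ 1) (q : Fin 3)
    (hPγ : ∀ p ∈ Pγ, blockIdx (k / 2) p.1 ∈ Γ) {N : ℕ} [NeZero N] :
    |∫ x : Fin N → Pt in Set.univ.pi (fun _ => regionOf k B),
        ∑ b : Fin N → Bool, ursell k α (fun m => (x m, (q, b m))) *
          FgamL k α B Γ Pγ (mkConf x fun m => (q, b m))|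
      ≤ 2 ^ N * (N * (N ^ N * ((Γ.card * (5 * k / 2) ^ 3) * (8 * k ^ 2) ^ (N - 1)))) := by
  have hk0 : 0 ≤ k := by linarith
  set f : (Fin N → Pt) → ℝ := fun x => ∑ b : Fin N → Bool, ursell k α (fun m => (x m, (q, b m))) *
    FgamL k α B Γ Pγ (mkConf x fun m => (q, b m))
  have hpt : ∀ x, ENNReal.ofReal ‖f x‖ ≤
      2 ^ N * rootedTreeSum ((contourNbhd k Γ).indicator 1) (slabKernel k q) x := fun x =>
    calc ENNReal.ofReal ‖f x‖
        ≤ ∑ b : Fin N → Bool, ENNReal.ofReal |ursell k α (fun m => (x m, (q, b m))) *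
            FgamL k α B Γ Pγ (mkConf x fun m => (q, b m))| := by
          rw [← ENNReal.ofReal_sum_of_nonneg fun _ _ => abs_nonneg _]
          exact ENNReal.ofReal_le_ofReal (Finset.abs_sum_le_sum_abs _ _)
      _ ≤ ∑ _b : Fin N → Bool, rootedTreeSum ((contourNbhd k Γ).indicator 1) (slabKernel k q) x :=
          Finset.sum_le_sum fun b _ => ofReal_abs_ursell_mul_FgamL_le hk hα q hPγ x b
      _ = _ := by simp [Finset.card_univ]
  have hlint : ∫⁻ x, ENNReal.ofReal ‖f x‖ ≤ 2 ^ N * (N * (N ^ N *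
      ((Γ.card * ENNReal.ofReal ((5 * k / 2) ^ 3)) * ENNReal.ofReal (8 * k ^ 2) ^ (N - 1)))) := by
    refine (lintegral_mono hpt).trans ?_
    rw [lintegral_const_mul' _ _ (by simp), volume_pi]
    gcongr
    refine (lintegral_rootedTreeSum_le (measurable_one.indicator (measurableSet_contourNbhd k Γ))
      (measurable_slabKernel k q) (fun c => (lintegral_slabKernel hk0 q c).le)).trans ?_
    rw [Fintype.card_fin, lintegral_indicator_one (measurableSet_contourNbhd k Γ)]
    gcongr
    exact volume_contourNbhd_le hk0 Γ
  calc _ = ‖∫ x in Set.univ.pi (fun _ => regionOf k B), f x‖ := (Real.norm_eq_abs _).symm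
    _ ≤ (∫⁻ x in Set.univ.pi (fun _ => regionOf k B), ENNReal.ofReal ‖f x‖).toReal :=
        norm_integral_le_lintegral_norm f
    _ ≤ (2 ^ N * (N * (N ^ N * ((Γ.card * ENNReal.ofReal ((5 * k / 2) ^ 3)) *
          ENNReal.ofReal (8 * k ^ 2) ^ (N - 1)))) : ℝ≥0∞).toReal :=
        ENNReal.toReal_mono (by simp [ENNReal.mul_eq_top]) <|
          (lintegral_mono' Measure.restrict_le_self le_rfl).trans hlint
    _ = _ := by
        have : 0 ≤ (5 * k / 2) ^ 3 := by positivity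
        simp [ENNReal.toReal_mul, ENNReal.toReal_ofReal, hk0, this, ENNReal.toReal_pow]

end DressingIntegrand

section Series

open scoped Nat

lemma natCast_mul_pow_self_div_factorial_le (N : ℕ) : (N : ℝ) * N ^ N / N ! ≤ 6 ^ N := by
  have hN : (N : ℝ) ≤ 2 ^ N := by exact_mod_cast Nat.lt_two_pow_self.le
  have hexp : (N : ℝ) ^ N / N ! ≤ 3 ^ N :=
    calc (N : ℝ) ^ N / N ! ≤ Real.exp N := Real.pow_div_factorial_le_exp _ N.cast_nonneg N
      _ = Real.exp 1 ^ N := by rw [← Real.exp_nat_mul, mul_one]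
      _ ≤ 3 ^ N := pow_le_pow_left₀ (Real.exp_pos 1).le
          (Real.exp_one_lt_d9.le.trans (by norm_num)) N
  calc (N : ℝ) * N ^ N / N ! = N * (N ^ N / N !) := mul_div_assoc _ _ _
    _ ≤ 2 ^ N * 3 ^ N := mul_le_mul hN hexp (by positivity) (by positivity)
    _ = 6 ^ N := by rw [← mul_pow]; norm_num

lemma dressing_term_le {z k c : ℝ} (hz : 0 ≤ z) (hk : 0 < k) (hc : 0 ≤ c) (N : ℕ) [NeZero N] :
    z ^ N / N ! * (2 ^ N * (N * (N ^ N * ((c * (5 * k / 2) ^ 3) * (8 * k ^ 2) ^ (N - 1)))))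
      ≤ 2 * c * k * (96 * (z * k ^ 2)) ^ N := by
  obtain ⟨n, rfl⟩ := Nat.exists_eq_add_one_of_ne_zero (NeZero.ne N)
  calc z ^ (n + 1) / (n + 1)! *
        (2 ^ (n + 1) * ((n + 1 : ℕ) * ((n + 1 : ℕ) ^ (n + 1) *
          ((c * (5 * k / 2) ^ 3) * (8 * k ^ 2) ^ (n + 1 - 1)))))
      = ((n + 1 : ℕ) * (n + 1 : ℕ) ^ (n + 1) / (n + 1)!) *
          (125 / 64 * c * k * (2 ^ (n + 1) * 8 ^ (n + 1) * (z * k ^ 2) ^ (n + 1))) := by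
        rw [Nat.add_sub_cancel]
        field_simp
        ring
    _ ≤ 6 ^ (n + 1) * (2 * c * k * (2 ^ (n + 1) * 8 ^ (n + 1) * (z * k ^ 2) ^ (n + 1))) := by
        gcongr
        · exact natCast_mul_pow_self_div_factorial_le (n + 1)
        · norm_num
    _ = 2 * c * k * (96 * (z * k ^ 2)) ^ (n + 1) := by
        rw [show (96 : ℝ) = 6 * 2 * 8 by norm_num]
        simp only [mul_pow]
        ring

lemma neg_tsum_le_of_abs_le_geometric {a : ℕ → ℝ} {K r : ℝ} (ha₀ : 0 ≤ a 0) (hr₀ : 0 ≤ r)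
    (hr : r ≤ 1 / 2) (ha : ∀ n, |a (n + 1)| ≤ K * r ^ (n + 2)) :
    -∑' n, a n ≤ 2 * K * r ^ 2 := by
  have hg : ∀ n, K * r ^ (n + 2) = K * r ^ 2 * r ^ n := fun n => by ring
  have hgeom : HasSum (fun n => K * r ^ (n + 2)) (K * r ^ 2 * (1 - r)⁻¹) := by
    rw [show (fun n => K * r ^ (n + 2)) = fun n => K * r ^ 2 * r ^ n from funext hg]
    exact (hasSum_geometric_of_lt_one hr₀ (by linarith)).mul_left _
  have htail : Summable fun n => a (n + 1) := hgeom.summable.of_norm_bounded ha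
  have hKr : 0 ≤ K * r ^ 2 := (abs_nonneg _).trans (ha 0)
  have hinv : (1 - r)⁻¹ ≤ 2 := by
    rw [inv_le_comm₀ (by linarith) (by norm_num)]
    linarith
  rw [((summable_nat_add_iff 1).1 htail).tsum_eq_zero_add, neg_add, ← tsum_neg]
  calc -a 0 + ∑' n, -a (n + 1) ≤ 0 + K * r ^ 2 * (1 - r)⁻¹ := by
        refine add_le_add (neg_nonpos.2 ha₀) (hgeom.tsum_eq ▸ ?_)
        exact Summable.tsum_le_tsum (fun n => (neg_le_abs _).trans (ha n)) htail.neg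
          hgeom.summable
    _ ≤ 2 * K * r ^ 2 := by nlinarith

end Series

end

/-- **Bound on the contour dressing factor.**  There is `C > 0` such that, if
`z k²` is sufficiently small, then for every `q` and every contour `γ`
(a possible skeleton together with a compatible plate configuration `Pγ`
inside its support),
`exp(-∫_{Ω^q_Λ} dP φ^T(P) z^{|P|} F_γ(P)) ≤ e^{C (zk³)(zk²) |Γ_γ'|}`. -/
theorem contour_dressing_factor_bound :
    ∃ C δ : ℝ, 0 < C ∧ 0 < δ ∧
      ∀ k α z : ℝ, 1 < k → α ∈ Set.Ioc (3/4 : ℝ) 1 → 0 < z → z * k ^ 2 ≤ δ →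
        ∀ m : ℕ, 1 ≤ m → ∀ q : Fin 3, ∀ s : Skeleton, ∀ Pγ : List Plate,
          PossibleSkel k α (boxBm m) q s → extMagIs (boxBm m) s q →
          (∀ p ∈ Pγ, blockIdx (k / 2) p.1 ∈ s.Γ) →
          confWeightL (k / 2) s.Γ s.σ Pγ * phiL k α Pγ ≠ 0 →
          Real.exp (-(dressInt k α z (boxBm m) q s.Γ Pγ)) ≤
            Real.exp (C * (z * k ^ 3) * (z * k ^ 2) * (s.Γ.card : ℝ)) := by
  refine ⟨36864, 1 / 192, by norm_num, by norm_num, ?_⟩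
  intro k α z hk hα hz hδ m _ q s Pγ _ _ hPγ _
  have hk0 : 0 < k := by linarith
  rw [Real.exp_le_exp, dressInt]
  refine (neg_tsum_le_of_abs_le_geometric (K := 2 * s.Γ.card * k) (r := 96 * (z * k ^ 2))
    ?_ (by positivity) (by linarith) fun n => ?_).trans_eq (by ring)
  · refine mul_nonneg (by positivity) (integral_nonneg fun x => Finset.sum_nonneg fun b _ => ?_)
    rw [ursell_fin_one, one_mul]
    rcases FgamL_eq_zero_or_one k α (boxBm m) s.Γ Pγ (mkConf x fun i => (q, b i)) with h | h <;>
      simp [h]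
  · rw [abs_mul, abs_of_nonneg (by positivity)]
    exact (mul_le_mul_of_nonneg_left (abs_integral_ursell_mul_FgamL_le hk hα.2 q hPγ)
      (by positivity)).trans (dressing_term_le hz.le hk0 s.Γ.card.cast_nonneg (n + 2))
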